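/- Let T be a rigid object in the skeletally small category C and let L_S : C → C_S be the localisation of C at the class S. Then: (i) for any object U of ΣT^⊥ and any object X of C, the projection π_X : X ⊕ U → X belongs to S and L_S(π_X) is invertible in C_S with inverse L_S(ι_X), where ι_X : X → X ⊕ U is the inclusion; (ii) if a map u : X → Y in C factors through an object of ΣT^⊥, then L_S(u) = L_S(0); (iii) if u, v : X → Y are maps in C and v factors through an object of ΣT^⊥, then L_S(u + v) = L_S(u). -/

import Mathlib

/-!
Common setup: `C` is a Hom-finite, Krull-Schmidt (= idempotent complete, given
Hom-finiteness over a field), `k`-linear triangulated category with suspension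
functor `Σ = shiftFunctor C (1 : ℤ)`, and `T` is a rigid object of `C`.
-/

noncomputable section

open CategoryTheory CategoryTheory.Limits CategoryTheory.Pretriangulated

universe v u

namespace PaperBM

variable {C : Type u} [Category.{v} C] [Preadditive C] [HasZeroObject C]
  [HasShift C ℤ] [∀ n : ℤ, (shiftFunctor C n).Additive] [Pretriangulated C]
  [HasFiniteBiproducts C]

/-- `X` lies in `add T`: it is a direct summand of a finite direct sum of copies of `T`. -/
def memAdd (T X : C) : Prop :=
  ∃ (n : ℕ) (s : X ⟶ ⨁ (fun _ : Fin n => T)) (r : (⨁ fun _ : Fin n => T) ⟶ X), s ≫ r = 𝟙 X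

/-- `T` is rigid: `Hom_C(T, ΣT) = 0`. -/
def IsRigidObj (T : C) : Prop := ∀ f : T ⟶ (shiftFunctor C (1 : ℤ)).obj T, f = 0

/-- `Y ∈ T^⊥`, i.e. `Hom_C(X, ΣY) = 0` for all `X ∈ add T`. -/
def memTperp (T Y : C) : Prop :=
  ∀ (X : C), memAdd T X → ∀ f : X ⟶ (shiftFunctor C (1 : ℤ)).obj Y, f = 0

/-- `Y ∈ ⊥T`, i.e. `Hom_C(Y, ΣX) = 0` for all `X ∈ add T`. -/
def memPerpT (T Y : C) : Prop :=
  ∀ (X : C), memAdd T X → ∀ f : Y ⟶ (shiftFunctor C (1 : ℤ)).obj X, f = 0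

/-- `Y ∈ ΣT^⊥`, the image of `T^⊥` under the suspension `Σ`. -/
def memSigmaTperp (T Y : C) : Prop :=
  ∃ Z : C, memTperp T Z ∧ Nonempty (Y ≅ (shiftFunctor C (1 : ℤ)).obj Z)

/-- The map `f` factors through an object belonging to the class `P` of objects. -/
def FactorsThru (P : C → Prop) {A B : C} (f : A ⟶ B) : Prop :=
  ∃ (Z : C) (g : A ⟶ Z) (h : Z ⟶ B), P Z ∧ g ≫ h = f

/-- The class `S̃` of maps `f : X ⟶ Y` such that in a completion
`Σ⁻¹Z →h X →f Y →g Z` of `f` to a triangle (where `A` plays the role of `Σ⁻¹Z`,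
so that `Z = ΣA`), both `g` and `h` factor through an object of `ΣT^⊥`. -/
def Stilde (T : C) : MorphismProperty C := fun X Y f =>
  ∃ (A : C) (h : A ⟶ X) (g : Y ⟶ (shiftFunctor C (1 : ℤ)).obj A),
    (Triangle.mk h f g ∈ distTriang C) ∧
    FactorsThru (memSigmaTperp T) g ∧ FactorsThru (memSigmaTperp T) h

/-- The class `S` of maps `f : X ⟶ Y` such that in a completion
`Σ⁻¹Z →h X →f Y →g Z` of `f` to a triangle (where `A` plays the role of `Σ⁻¹Z`,
so that `Z = ΣA`), `g` factors through an object of `ΣT^⊥` and `Σ⁻¹Z ∈ ΣT^⊥`. -/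
def Sclass (T : C) : MorphismProperty C := fun X Y f =>
  ∃ (A : C) (h : A ⟶ X) (g : Y ⟶ (shiftFunctor C (1 : ℤ)).obj A),
    (Triangle.mk h f g ∈ distTriang C) ∧
    FactorsThru (memSigmaTperp T) g ∧ memSigmaTperp T A

/-- `X ∈ C(T)`: there is a triangle `T₁ → T₀ → X → ΣT₁` with `T₀, T₁ ∈ add T`. -/
def memCT (T X : C) : Prop :=
  ∃ (T₁ T₀ : C) (a : T₁ ⟶ T₀) (b : T₀ ⟶ X) (c : X ⟶ (shiftFunctor C (1 : ℤ)).obj T₁),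
    memAdd T T₁ ∧ memAdd T T₀ ∧ (Triangle.mk a b c ∈ distTriang C)

/-- `f : X₀ ⟶ Y` is a right `P`-approximation of `Y`. -/
def IsRightApprox (P : C → Prop) {X₀ Y : C} (f : X₀ ⟶ Y) : Prop :=
  P X₀ ∧ ∀ (W : C), P W → ∀ g : W ⟶ Y, ∃ g' : W ⟶ X₀, g' ≫ f = g

/-- `f : Y ⟶ X₀` is a left `P`-approximation of `Y`. -/
def IsLeftApprox (P : C → Prop) {Y X₀ : C} (f : Y ⟶ X₀) : Prop :=
  P X₀ ∧ ∀ (W : C), P W → ∀ g : Y ⟶ W, ∃ g' : X₀ ⟶ W, f ≫ g' = g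

/-- The map `f : X₀ ⟶ Y` is right minimal. -/
def IsRightMinimal {X₀ Y : C} (f : X₀ ⟶ Y) : Prop :=
  ∀ g : X₀ ⟶ X₀, g ≫ f = f → IsIso g

/-- The old `Module (End X)` structure on `unop X ⟶ Y` for `X : Cᵒᵖ` (Mathlib, Dec 2024). -/
instance oldModuleEndLeft {X : Cᵒᵖ} {Y : C} : Module (End X) (Opposite.unop X ⟶ Y) where
  smul r f := r.unop ≫ f
  one_smul f := by simp [HSMul.hSMul]
  mul_smul r s f := by
    change (r * s).unop ≫ f = r.unop ≫ s.unop ≫ f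
    simp [End.mul_def]
  smul_add r f g := Preadditive.comp_add _ _ _ _ _ _
  smul_zero r := Limits.comp_zero
  add_smul r s f := by
    change (r + s).unop ≫ f = r.unop ≫ f + s.unop ≫ f
    rw [show (r + s).unop = r.unop + s.unop from rfl, Preadditive.add_comp]
  zero_smul f := by
    change (0 : End X).unop ≫ f = 0
    simp

/-- The old `preadditiveCoyonedaObj` (Mathlib, Dec 2024), for `X : Cᵒᵖ`. -/
def oldPreadditiveCoyonedaObj (X : Cᵒᵖ) : C ⥤ ModuleCat.{v} (End X) where
  obj Y := ModuleCat.of _ (Opposite.unop X ⟶ Y)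
  map f := ModuleCat.ofHom
    { toFun := fun g => g ≫ f
      map_add' := fun _ _ => Preadditive.add_comp _ _ _ _ _ _
      map_smul' := fun _ _ => Category.assoc _ _ _ }

/-- The functor `H = Hom_C(T, -) : C ⥤ Mod End_C(T)ᵒᵖ`.  Here, with Mathlib's
conventions, the endomorphism ring `End (Opposite.op T)` of `T` viewed in `Cᵒᵖ` plays
the role of `End_C(T)ᵒᵖ`, so that each `Hom_C(T, X)` is a left module over it. -/
abbrev homFunctor (T : C) : C ⥤ ModuleCat.{v} (End (Opposite.op T)) :=
  oldPreadditiveCoyonedaObj (Opposite.op T)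

/-- The predicate on `End_C(T)ᵒᵖ`-modules of being finite-dimensional (equivalently,
since `End_C(T)` is a finite-dimensional algebra, finitely generated). -/
abbrev isFinDim (T : C) : ModuleCat.{v} (End (Opposite.op T)) → Prop :=
  fun M => Module.Finite (End (Opposite.op T)) M

/-- The category `mod End_C(T)ᵒᵖ` of finite-dimensional `End_C(T)ᵒᵖ`-modules. -/
abbrev fdMod (T : C) := ObjectProperty.FullSubcategory (isFinDim T)

/-- The ideal relation on `C(T)` of maps factoring through an object of `ΣT^⊥`. -/
def homRelCT (T : C) : HomRel (ObjectProperty.FullSubcategory (memCT T)) :=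
  fun A B f g => FactorsThru (memSigmaTperp T) ((f.hom - g.hom : A.obj ⟶ B.obj))

/-- The ideal relation on `C(T)` of maps factoring through an object of `add ΣT`. -/
def homRelCTadd (T : C) : HomRel (ObjectProperty.FullSubcategory (memCT T)) :=
  fun A B f g => FactorsThru (memAdd ((shiftFunctor C (1 : ℤ)).obj T)) ((f.hom - g.hom : A.obj ⟶ B.obj))

/-- The ideal relation on `C` of maps factoring through an object of `add ΣT`. -/
def homRelAdd (T : C) : HomRel C :=
  fun A B f g => FactorsThru (memAdd ((shiftFunctor C (1 : ℤ)).obj T)) (f - g)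

end PaperBM

open PaperBM

section

variable {C : Type u} [Category.{v} C] [Preadditive C] [HasZeroObject C]
  [HasShift C ℤ] [∀ n : ℤ, (shiftFunctor C n).Additive] [Pretriangulated C]

lemma biprod_inr_fst_zero_distinguished (U X : C) :
    Triangle.mk (biprod.inr : U ⟶ X ⊞ U) biprod.fst (0 : X ⟶ U⟦(1 : ℤ)⟧) ∈ distTriang C :=
  isomorphic_distinguished _ (binaryBiproductTriangle_distinguished U X) _
    (Triangle.isoMk _ _ (Iso.refl U) (biprod.braiding X U) (Iso.refl X)
      (by
        change biprod.inr ≫ (biprod.braiding X U).hom = 𝟙 U ≫ biprod.inl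
        apply biprod.hom_ext <;> simp)
      (by
        change biprod.fst ≫ 𝟙 X = (biprod.braiding X U).hom ≫ biprod.snd
        simp)
      (by
        change (0 : X ⟶ U⟦(1 : ℤ)⟧) ≫ (shiftFunctor C (1 : ℤ)).map (𝟙 U) = 𝟙 X ≫ 0
        simp))

lemma PaperBM.sclass_biprod_fst {T U : C} (X : C) (hU : memSigmaTperp T U) :
    Sclass T (biprod.fst : X ⊞ U ⟶ X) :=
  ⟨U, biprod.inr, 0, biprod_inr_fst_zero_distinguished U X, ⟨U, 0, 0, hU, by simp⟩, hU⟩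

end

section

variable {C : Type u} [Category.{v} C] [Preadditive C] [HasBinaryBiproducts C]
  {D : Type*} [Category D] (F : C ⥤ D)

lemma map_biprod_inl_comp_map_fst (X U : C) :
    F.map (biprod.inl : X ⟶ X ⊞ U) ≫ F.map biprod.fst = 𝟙 (F.obj X) := by
  rw [← F.map_comp, biprod.inl_fst, F.map_id]

lemma map_biprod_fst_comp_map_inl (X U : C) [IsIso (F.map (biprod.fst : X ⊞ U ⟶ X))] :
    F.map (biprod.fst : X ⊞ U ⟶ X) ≫ F.map biprod.inl = 𝟙 (F.obj (X ⊞ U)) := by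
  rw [← cancel_mono (F.map biprod.fst), Category.assoc, map_biprod_inl_comp_map_fst,
    Category.comp_id, Category.id_comp]

lemma map_biprod_lift_id_eq_map_inl {X U : C} [IsIso (F.map (biprod.fst : X ⊞ U ⟶ X))]
    (g : X ⟶ U) : F.map (biprod.lift (𝟙 X) g) = F.map biprod.inl := by
  rw [← cancel_mono (F.map biprod.fst), ← F.map_comp, ← F.map_comp, biprod.lift_fst,
    biprod.inl_fst]

/-- `u + g ≫ h = lift 𝟙 g ≫ desc u h`, and `F` identifies `lift 𝟙 g` with `inl`, both being
sections of the inverted projection. -/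
lemma map_add_eq_of_factorsThru (P : C → Prop)
    (hF : ∀ (X Z : C), P Z → IsIso (F.map (biprod.fst : X ⊞ Z ⟶ X)))
    {X Y : C} (u v : X ⟶ Y) (hv : FactorsThru P v) : F.map (u + v) = F.map u := by
  obtain ⟨Z, g, h, hZ, rfl⟩ := hv
  have := hF X Z hZ
  calc F.map (u + g ≫ h) = F.map (biprod.lift (𝟙 X) g) ≫ F.map (biprod.desc u h) := by
        rw [← F.map_comp, biprod.lift_desc, Category.id_comp]
    _ = F.map u := by
        rw [map_biprod_lift_id_eq_map_inl, ← F.map_comp, biprod.inl_desc]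

end

/-- Elementary properties of the localisation functor `L_S : C ⥤ C_S`:
(i) for `U ∈ ΣT^⊥` and any `X`, the projection `π_X : X ⊞ U ⟶ X` belongs to `S` and
`L_S(π_X)` is invertible with inverse `L_S(ι_X)`;
(ii) if `u` factors through an object of `ΣT^⊥` then `L_S(u) = L_S(0)`;
(iii) if `v` factors through an object of `ΣT^⊥` then `L_S(u + v) = L_S(u)`. -/
theorem statement_11 {C : Type u} [Category.{v} C] [Preadditive C] [HasZeroObject C]
    [HasShift C ℤ] [∀ n : ℤ, (shiftFunctor C n).Additive] [Pretriangulated C]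
    [HasFiniteBiproducts C]
    {k : Type*} [Field k] [CategoryTheory.Linear k C]
    [∀ X Y : C, FiniteDimensional k (X ⟶ Y)] [IsIdempotentComplete C]
    [EssentiallySmall.{v} C] (T : C) (hT : IsRigidObj T) :
    (∀ (U X : C), memSigmaTperp T U →
      Sclass T (biprod.fst : X ⊞ U ⟶ X) ∧
      (Sclass T).Q.map (biprod.fst : X ⊞ U ⟶ X) ≫
          (Sclass T).Q.map (biprod.inl : X ⟶ X ⊞ U) = 𝟙 ((Sclass T).Q.obj (X ⊞ U)) ∧
      (Sclass T).Q.map (biprod.inl : X ⟶ X ⊞ U) ≫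
          (Sclass T).Q.map (biprod.fst : X ⊞ U ⟶ X) = 𝟙 ((Sclass T).Q.obj X)) ∧
    (∀ (X Y : C) (u : X ⟶ Y), FactorsThru (memSigmaTperp T) u →
      (Sclass T).Q.map u = (Sclass T).Q.map (0 : X ⟶ Y)) ∧
    (∀ (X Y : C) (u v : X ⟶ Y), FactorsThru (memSigmaTperp T) v →
      (Sclass T).Q.map (u + v) = (Sclass T).Q.map u) := by
  have hQ : ∀ (X U : C), memSigmaTperp T U → IsIso ((Sclass T).Q.map (biprod.fst : X ⊞ U ⟶ X)) :=
    fun X _ hU => Localization.inverts _ (Sclass T) _ (sclass_biprod_fst X hU)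
  refine ⟨fun U X hU => ?_, fun X Y u hu => ?_,
    fun X Y u v hv => map_add_eq_of_factorsThru _ _ hQ u v hv⟩
  · have := hQ X U hU
    exact ⟨sclass_biprod_fst X hU, map_biprod_fst_comp_map_inl _ X U,
      map_biprod_inl_comp_map_fst _ X U⟩
  · simpa using map_add_eq_of_factorsThru _ _ hQ 0 u hu
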